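/- arXiv:0801.0525 — 3 statements merged into one kernel-verified Lean document; each statement's English description precedes it below -/
import Mathlib

section
/- For the surface r(u,v) = (u cos θ cos v + γ₁(v), u cos θ sin v + γ₂(v), u sin θ) with γ'(v) = cos θ·α(v)·(-sin v, cos v), the tangent vectors satisfy ⟪r_u, r_u⟫ = 1, ⟪r_u, r_v⟫ = 0, and ⟪r_v, r_v⟫ = cos²θ·(u + α(v))², i.e. the first fundamental form is du² + β² dv² with β = cos θ·(u + α(v)). -/
/-!
In `u` the surface is a straight line through `γ(v)` with unit direction
`d(v) = (cos θ cos v, cos θ sin v, sin θ)`, so `r_u = d(v)`. Since `d'(v) = cos θ · n(v)` with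
`n(v) = (-sin v, cos v, 0)`, the hypothesis on `γ'` gives `r_v = cos θ · (u + α v) · n(v)`, and
`d(v), n(v)` are orthonormal.
-/

open Real WithLp

section PiLp

variable {𝕜 ι : Type*} [NontriviallyNormedField 𝕜] [Fintype ι]
  {p : ENNReal} [Fact (1 ≤ p)] {E : ι → Type*} [∀ i, NormedAddCommGroup (E i)]
  [∀ i, NormedSpace 𝕜 (E i)]

theorem hasDerivAt_piLp {f : 𝕜 → PiLp p E} {f' : PiLp p E} {x : 𝕜} :
    HasDerivAt f f' x ↔ ∀ i, HasDerivAt (fun t => f t i) (f' i) x := by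
  rw [← hasDerivAt_pi (φ := fun t => ofLp (f t))]
  refine ⟨fun h => (PiLp.hasFDerivAt_ofLp p (f x)).comp_hasDerivAt x h, fun h => ?_⟩
  exact (PiLp.hasFDerivAt_toLp p (ofLp (f x))).comp_hasDerivAt (f := fun t => ofLp (f t)) x h

end PiLp

noncomputable def rulingDir (θ v : ℝ) : EuclideanSpace ℝ (Fin 3) :=
  toLp 2 ![cos θ * cos v, cos θ * sin v, sin θ]

noncomputable def circleTangent (v : ℝ) : EuclideanSpace ℝ (Fin 3) :=
  toLp 2 ![-sin v, cos v, 0]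

theorem inner_toLp_fin_three (a b : Fin 3 → ℝ) :
    inner ℝ (toLp 2 a : EuclideanSpace ℝ (Fin 3)) (toLp 2 b) =
      a 0 * b 0 + a 1 * b 1 + a 2 * b 2 := by
  simp only [PiLp.inner_apply, Fin.sum_univ_three, RCLike.inner_apply, conj_trivial]
  ring

theorem inner_rulingDir_self (θ v : ℝ) : inner ℝ (rulingDir θ v) (rulingDir θ v) = 1 := by
  simp only [rulingDir, inner_toLp_fin_three, Matrix.cons_val]
  linear_combination cos θ ^ 2 * sin_sq_add_cos_sq v + sin_sq_add_cos_sq θ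

theorem inner_rulingDir_circleTangent (θ v : ℝ) :
    inner ℝ (rulingDir θ v) (circleTangent v) = 0 := by
  simp only [rulingDir, circleTangent, inner_toLp_fin_three, Matrix.cons_val]
  ring

theorem inner_circleTangent_self (v : ℝ) :
    inner ℝ (circleTangent v) (circleTangent v) = 1 := by
  simp only [circleTangent, inner_toLp_fin_three, Matrix.cons_val]
  linear_combination sin_sq_add_cos_sq v

section Surface

variable {θ : ℝ} {α γ₁ γ₂ : ℝ → ℝ} {r : ℝ → ℝ → EuclideanSpace ℝ (Fin 3)}
  (hr : ∀ u v, ofLp (r u v) =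
    ![u * cos θ * cos v + γ₁ v, u * cos θ * sin v + γ₂ v, u * sin θ])
include hr

theorem surface_eq_add_smul_rulingDir (u v : ℝ) : r u v = r 0 v + u • rulingDir θ v := by
  ext i
  fin_cases i <;>
    simp only [Fin.zero_eta, Fin.mk_one, Fin.reduceFinMk, hr, rulingDir, PiLp.add_apply,
      PiLp.smul_apply, smul_eq_mul, Matrix.cons_val, zero_mul, zero_add] <;> ring

theorem hasDerivAt_surface_fst (u v : ℝ) : HasDerivAt (fun t => r t v) (rulingDir θ v) u := by
  rw [funext fun t => surface_eq_add_smul_rulingDir hr t v]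
  simpa only [hasDerivAt_const_add_iff, id_eq, one_smul] using
    (hasDerivAt_id u).smul_const (rulingDir θ v)

theorem hasDerivAt_surface_snd {u v : ℝ}
    (hγ₁ : HasDerivAt γ₁ (cos θ * α v * -sin v) v)
    (hγ₂ : HasDerivAt γ₂ (cos θ * α v * cos v) v) :
    HasDerivAt (fun t => r u t) ((cos θ * (u + α v)) • circleTangent v) v := by
  rw [hasDerivAt_piLp]
  intro i
  fin_cases i <;>
    simp only [Fin.zero_eta, Fin.mk_one, Fin.reduceFinMk, hr, circleTangent, PiLp.smul_apply,
      smul_eq_mul, Matrix.cons_val]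
  · exact (((hasDerivAt_cos v).const_mul (u * cos θ)).add hγ₁).congr_deriv (by ring)
  · exact (((hasDerivAt_sin v).const_mul (u * cos θ)).add hγ₂).congr_deriv (by ring)
  · exact (hasDerivAt_const v _).congr_deriv (by ring)

end Surface

/-- For the surface
`r(u,v) = (u cos θ cos v + γ₁ v, u cos θ sin v + γ₂ v, u sin θ)` with
`γ'(v) = cos θ · α(v) · (-sin v, cos v)`, the tangent vectors satisfy `⟪r_u, r_u⟫ = 1`,
`⟪r_u, r_v⟫ = 0` and `⟪r_v, r_v⟫ = cos²θ · (u + α v)²`, i.e. the first fundamental form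
is `du² + β² dv²` with `β = cos θ · (u + α v)`. -/
theorem first_fundamental_form
    (θ : ℝ) (I : Set ℝ) (α γ₁ γ₂ : ℝ → ℝ)
    (hγ₁ : ∀ v ∈ I, HasDerivAt γ₁ (Real.cos θ * α v * (-Real.sin v)) v)
    (hγ₂ : ∀ v ∈ I, HasDerivAt γ₂ (Real.cos θ * α v * (Real.cos v)) v)
    (r : ℝ → ℝ → EuclideanSpace ℝ (Fin 3))
    (hr : ∀ u v, r u v =
      ![u * Real.cos θ * Real.cos v + γ₁ v, u * Real.cos θ * Real.sin v + γ₂ v,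
        u * Real.sin θ]) :
    ∀ u : ℝ, ∀ v ∈ I,
      (inner ℝ (deriv (fun t => r t v) u) (deriv (fun t => r t v) u) : ℝ) = 1 ∧
      (inner ℝ (deriv (fun t => r t v) u) (deriv (fun t => r u t) v) : ℝ) = 0 ∧
      (inner ℝ (deriv (fun t => r u t) v) (deriv (fun t => r u t) v) : ℝ) =
        Real.cos θ ^ 2 * (u + α v) ^ 2 := by
  intro u v hv
  rw [(hasDerivAt_surface_fst hr u v).deriv,
    (hasDerivAt_surface_snd hr (hγ₁ v hv) (hγ₂ v hv)).deriv]
  simp only [real_inner_smul_left, real_inner_smul_right, inner_rulingDir_self,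
    inner_rulingDir_circleTangent, inner_circleTangent_self, mul_zero, mul_one, true_and]
  ring
end

section
/- For the constant angle surface r(u,v) = (u cos θ (cos v, sin v) + γ(v), u sin θ) with unit normal N(v) = (-sin θ cos v, -sin θ sin v, cos θ), the normal is independent of u (N_u = 0), hence the second fundamental form coefficients e = ⟪r_uu, N⟫ and f = ⟪r_uv, N⟫ both vanish, and consequently the Gaussian curvature K = (eg - f²)/(EG - F²) vanishes identically. -/
/-!
The surface is ruled: `r(u, v) = u • c(v) + γ(v)` with `c(v) = (cos θ cos v, cos θ sin v, sin θ)`,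
so `r_u = c(v)` does not depend on `u`. Hence `r_uu = 0`, giving `e = 0`, and
`r_uv = c'(v) = cos θ (-sin v, cos v, 0)`, which is orthogonal to `N(v)`, giving `f = 0`.
The numerator `eg - f²` of `K` then vanishes.
-/

open Real

theorem PiLp.hasDerivAt_iff {𝕜 ι : Type*} [NontriviallyNormedField 𝕜] [Fintype ι]
    {E : ι → Type*} [∀ i, NormedAddCommGroup (E i)] [∀ i, NormedSpace 𝕜 (E i)]
    {p : ENNReal} [Fact (1 ≤ p)] {f : 𝕜 → PiLp p E} {f' : PiLp p E} {x : 𝕜} :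
    HasDerivAt f f' x ↔ ∀ i, HasDerivAt (fun t => f t i) (f' i) x := by
  rw [← hasDerivAt_pi]
  refine ⟨fun h => (PiLp.hasFDerivAt_ofLp (𝕜 := 𝕜) p (f x)).comp_hasDerivAt x h, fun h => ?_⟩
  have h' := (PiLp.hasFDerivAt_toLp (𝕜 := 𝕜) p (f x).ofLp).comp_hasDerivAt x h
  exact h'

section RuledSurface

variable {E : Type*} [NormedAddCommGroup E] [NormedSpace ℝ E] (c γ : ℝ → E) (u v : ℝ)

theorem deriv_ruledSurface_fst : deriv (fun s => s • c v + γ v) u = c v := by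
  simpa using (((hasDerivAt_id u).smul_const (c v)).add_const (γ v)).deriv

theorem deriv_deriv_ruledSurface_fst :
    deriv (fun t => deriv (fun s => s • c v + γ v) t) u = 0 := by
  simp only [deriv_ruledSurface_fst, deriv_const]

theorem deriv_deriv_ruledSurface_fst_snd :
    deriv (fun t => deriv (fun s => s • c t + γ t) u) v = deriv c v := by
  simp only [deriv_ruledSurface_fst]

end RuledSurface

noncomputable def constAngleRuling (θ v : ℝ) : EuclideanSpace ℝ (Fin 3) :=
  !₂[cos θ * cos v, cos θ * sin v, sin θ]

theorem hasDerivAt_constAngleRuling (θ v : ℝ) :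
    HasDerivAt (constAngleRuling θ) !₂[-(cos θ * sin v), cos θ * cos v, 0] v := by
  refine PiLp.hasDerivAt_iff.2 fun i => ?_
  fin_cases i
  · simpa [constAngleRuling] using (hasDerivAt_cos v).const_mul (cos θ)
  · simpa [constAngleRuling] using (hasDerivAt_sin v).const_mul (cos θ)
  · simpa [constAngleRuling] using hasDerivAt_const v (sin θ)

theorem inner_deriv_constAngleRuling (θ v : ℝ) :
    inner ℝ (deriv (constAngleRuling θ) v)
      (!₂[-sin θ * cos v, -sin θ * sin v, cos θ] : EuclideanSpace ℝ (Fin 3)) = 0 := by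
  rw [(hasDerivAt_constAngleRuling θ v).deriv]
  simp only [PiLp.inner_apply, RCLike.inner_apply, ringHom_apply, Fin.sum_univ_three,
    Matrix.cons_val_zero, Matrix.cons_val_one, Matrix.cons_val]
  ring

theorem gaussian_curvature_vanishes_general
    (θ : ℝ) (I : Set ℝ) (γ₁ γ₂ : ℝ → ℝ)
    (r : ℝ → ℝ → EuclideanSpace ℝ (Fin 3))
    (hr : ∀ u v, r u v =
      ![u * Real.cos θ * Real.cos v + γ₁ v, u * Real.cos θ * Real.sin v + γ₂ v,
        u * Real.sin θ])
    (N : ℝ → EuclideanSpace ℝ (Fin 3))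
    (hN : ∀ v, N v = ![-Real.sin θ * Real.cos v, -Real.sin θ * Real.sin v, Real.cos θ])
    (E F G e f g K : ℝ → ℝ → ℝ)
    (he : ∀ u v, e u v = inner ℝ (deriv (fun t => deriv (fun s => r s v) t) u) (N v))
    (hf : ∀ u v, f u v = inner ℝ (deriv (fun t => deriv (fun s => r s t) u) v) (N v))
    (hK : ∀ u v, K u v = (e u v * g u v - f u v ^ 2) / (E u v * G u v - F u v ^ 2)) :
    ∀ u : ℝ, ∀ v ∈ I,
      (deriv (fun _ : ℝ => N v) u = 0) ∧ e u v = 0 ∧ f u v = 0 ∧ K u v = 0 := by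
  obtain ⟨γ, rfl⟩ : ∃ γ : ℝ → EuclideanSpace ℝ (Fin 3),
      r = fun u v => u • constAngleRuling θ v + γ v := by
    refine ⟨fun v => !₂[γ₁ v, γ₂ v, 0], ?_⟩
    ext u v i
    fin_cases i <;> simp [hr, constAngleRuling, mul_assoc]
  obtain rfl : N = fun v => !₂[-sin θ * cos v, -sin θ * sin v, cos θ] :=
    funext fun v => WithLp.ofLp_injective 2 (hN v)
  intro u v _
  have he0 : e u v = 0 := by
    rw [he, deriv_deriv_ruledSurface_fst, inner_zero_left]
  have hf0 : f u v = 0 := by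
    rw [hf, deriv_deriv_ruledSurface_fst_snd, inner_deriv_constAngleRuling]
  exact ⟨deriv_const u _, he0, hf0, by simp [hK, he0, hf0]⟩

/-- For the constant angle surface
`r(u,v) = (u cos θ (cos v, sin v) + γ(v), u sin θ)` with unit normal
`N(v) = (-sin θ cos v, -sin θ sin v, cos θ)`, the normal is independent of `u`, hence the
second fundamental form coefficients `e = ⟪r_uu, N⟫` and `f = ⟪r_uv, N⟫` vanish, and
consequently the Gaussian curvature `K = (eg - f²)/(EG - F²)` vanishes identically. -/
theorem gaussian_curvature_vanishes
    (θ : ℝ) (I : Set ℝ) (α γ₁ γ₂ : ℝ → ℝ)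
    (hγ₁ : ∀ v ∈ I, deriv γ₁ v = Real.cos θ * α v * (-Real.sin v))
    (hγ₂ : ∀ v ∈ I, deriv γ₂ v = Real.cos θ * α v * (Real.cos v))
    (r : ℝ → ℝ → EuclideanSpace ℝ (Fin 3))
    (hr : ∀ u v, r u v =
      ![u * Real.cos θ * Real.cos v + γ₁ v, u * Real.cos θ * Real.sin v + γ₂ v,
        u * Real.sin θ])
    (N : ℝ → EuclideanSpace ℝ (Fin 3))
    (hN : ∀ v, N v = ![-Real.sin θ * Real.cos v, -Real.sin θ * Real.sin v, Real.cos θ])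
    (E F G e f g K : ℝ → ℝ → ℝ)
    (hE : ∀ u v, E u v = inner ℝ (deriv (fun t => r t v) u) (deriv (fun t => r t v) u))
    (hF : ∀ u v, F u v = inner ℝ (deriv (fun t => r t v) u) (deriv (fun t => r u t) v))
    (hG : ∀ u v, G u v = inner ℝ (deriv (fun t => r u t) v) (deriv (fun t => r u t) v))
    (he : ∀ u v, e u v = inner ℝ (deriv (fun t => deriv (fun s => r s v) t) u) (N v))
    (hf : ∀ u v, f u v = inner ℝ (deriv (fun t => deriv (fun s => r s t) u) v) (N v))
    (hg : ∀ u v, g u v = inner ℝ (deriv (fun t => deriv (fun s => r u s) t) v) (N v))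
    (hK : ∀ u v, K u v = (e u v * g u v - f u v ^ 2) / (E u v * G u v - F u v ^ 2))
    (hreg : ∀ u : ℝ, ∀ v ∈ I, E u v * G u v - F u v ^ 2 ≠ 0) :
    ∀ u : ℝ, ∀ v ∈ I,
      (deriv (fun _ : ℝ => N v) u = 0) ∧ e u v = 0 ∧ f u v = 0 ∧ K u v = 0 :=
  gaussian_curvature_vanishes_general θ I γ₁ γ₂ r hr N hN E F G e f g K he hf hK
end

section
/- If N : U → ℝ³ is a smooth unit normal field with N_u = 0 and N_v = -λ r_v for a parametrized surface r with r_uu = 0 and r_uv = (β_u/β) r_v, then equality of mixed partials N_uv = N_vu forces λ_u + λ β_u/β = 0; combined with β_u = β λ cot θ this yields λ_u + λ² cot θ = 0. -/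
open Real

variable {E : Type*} [NormedAddCommGroup E] [NormedSpace ℝ E]

lemma slice1 {F : ℝ × ℝ → E} (hF : ContDiff ℝ (⊤ : ℕ∞) F) (u v : ℝ) :
    HasDerivAt (fun t => F (t, v)) (fderiv ℝ F (u, v) (1, 0)) u := by
  have h := (hF.differentiable (by simp) (u, v)).hasFDerivAt
  have h2 : HasDerivAt (fun t : ℝ => ((t, v) : ℝ × ℝ)) ((1 : ℝ), (0 : ℝ)) u :=
    HasDerivAt.prodMk (hasDerivAt_id u) (hasDerivAt_const u v)
  simpa [Function.comp_def] using h.comp_hasDerivAt u h2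

lemma slice2 {F : ℝ × ℝ → E} (hF : ContDiff ℝ (⊤ : ℕ∞) F) (u v : ℝ) :
    HasDerivAt (fun s => F (u, s)) (fderiv ℝ F (u, v) (0, 1)) v := by
  have h := (hF.differentiable (by simp) (u, v)).hasFDerivAt
  have h2 : HasDerivAt (fun s : ℝ => ((u, s) : ℝ × ℝ)) ((0 : ℝ), (1 : ℝ)) v :=
    HasDerivAt.prodMk (hasDerivAt_const v u) (hasDerivAt_id v)
  simpa [Function.comp_def] using h.comp_hasDerivAt v h2

lemma mixed12 {F : ℝ × ℝ → E} (hF : ContDiff ℝ (⊤ : ℕ∞) F) (u v : ℝ) :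
    HasDerivAt (fun t => deriv (fun s => F (t, s)) v)
      (fderiv ℝ (fderiv ℝ F) (u, v) (1, 0) (0, 1)) u := by
  have hg : ContDiff ℝ (⊤ : ℕ∞) (fderiv ℝ F) := hF.fderiv_right (by simp)
  have h1 := slice1 hg u v
  have h2 := ((ContinuousLinearMap.apply ℝ E (((0 : ℝ), (1 : ℝ)) : ℝ × ℝ)).hasFDerivAt).comp_hasDerivAt u h1
  have heq : (fun t => deriv (fun s => F (t, s)) v) = fun t => fderiv ℝ F (t, v) (0, 1) :=
    funext fun t => (slice2 hF t v).deriv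
  rw [heq]
  simpa [Function.comp_def] using h2

lemma mixed21 {F : ℝ × ℝ → E} (hF : ContDiff ℝ (⊤ : ℕ∞) F) (u v : ℝ) :
    HasDerivAt (fun t => deriv (fun s => F (s, t)) u)
      (fderiv ℝ (fderiv ℝ F) (u, v) (0, 1) (1, 0)) v := by
  have hg : ContDiff ℝ (⊤ : ℕ∞) (fderiv ℝ F) := hF.fderiv_right (by simp)
  have h1 := slice2 hg u v
  have h2 := ((ContinuousLinearMap.apply ℝ E (((1 : ℝ), (0 : ℝ)) : ℝ × ℝ)).hasFDerivAt).comp_hasDerivAt v h1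
  have heq : (fun t => deriv (fun s => F (s, t)) u) = fun t => fderiv ℝ F (u, t) (1, 0) :=
    funext fun t => (slice1 hF u t).deriv
  rw [heq]
  simpa [Function.comp_def] using h2

lemma schwarz {F : ℝ × ℝ → E} (hF : ContDiff ℝ (⊤ : ℕ∞) F) (u v : ℝ) :
    deriv (fun t => deriv (fun s => F (t, s)) v) u
      = deriv (fun t => deriv (fun s => F (s, t)) u) v := by
  rw [(mixed12 hF u v).deriv, (mixed21 hF u v).deriv]
  exact (hF.contDiffAt.isSymmSndFDerivAt (by rw [minSmoothness_of_isRCLikeNormedField]; exact WithTop.coe_le_coe.mpr le_top)) _ _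

/-- If `N` is a smooth unit normal field with `N_u = 0` and
`N_v = -λ r_v` for a parametrized surface `r` with `r_uu = 0` and
`r_uv = (β_u/β) r_v`, where `β_u = β λ cot θ` and `r_v ≠ 0`, then equality of mixed
partial derivatives of `N` forces `λ_u + λ β_u/β = 0`, which combined with
`β_u = β λ cot θ` yields `λ_u + λ² cot θ = 0`. -/
theorem compatibility_ode
    (θ : ℝ) (hθ : Real.sin θ ≠ 0)
    (r : ℝ → ℝ → EuclideanSpace ℝ (Fin 3))
    (N : ℝ → ℝ → EuclideanSpace ℝ (Fin 3))
    (β l : ℝ → ℝ → ℝ)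
    (hrsmooth : ContDiff ℝ (⊤ : ℕ∞) (fun p : ℝ × ℝ => r p.1 p.2))
    (hNsmooth : ContDiff ℝ (⊤ : ℕ∞) (fun p : ℝ × ℝ => N p.1 p.2))
    (hβsmooth : ContDiff ℝ (⊤ : ℕ∞) (fun p : ℝ × ℝ => β p.1 p.2))
    (hlsmooth : ContDiff ℝ (⊤ : ℕ∞) (fun p : ℝ × ℝ => l p.1 p.2))
    (hβpos : ∀ u v, 0 < β u v)
    (hrv : ∀ u v, deriv (fun t => r u t) v ≠ 0)
    (hruu : ∀ u v, deriv (fun t => deriv (fun s => r s v) t) u = 0)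
    (hruv : ∀ u v, deriv (fun t => deriv (fun s => r s t) u) v =
      (deriv (fun t => β t v) u / β u v) • deriv (fun t => r u t) v)
    (hβu : ∀ u v, deriv (fun t => β t v) u = β u v * l u v * Real.cot θ)
    (hNu : ∀ u v, deriv (fun t => N t v) u = 0)
    (hNv : ∀ u v, deriv (fun t => N u t) v = -(l u v) • deriv (fun t => r u t) v) :
    ∀ u v, (deriv (fun t => l t v) u + l u v * (deriv (fun t => β t v) u / β u v) = 0) ∧
      deriv (fun t => l t v) u + (l u v) ^ 2 * Real.cot θ = 0 := by
  intro u v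
  -- derivative of l in first variable
  have hl : HasDerivAt (fun t => l t v) (deriv (fun t => l t v) u) u :=
    ((slice1 hlsmooth u v).differentiableAt).hasDerivAt
  -- derivative of r_v in first variable, rewritten by Schwarz + hruv
  have hRd : HasDerivAt (fun t => deriv (fun s => r t s) v)
      (deriv (fun t => deriv (fun s => r t s) v) u) u :=
    ((mixed12 hrsmooth u v).differentiableAt).hasDerivAt
  have hRval : deriv (fun t => deriv (fun s => r t s) v) u =
      (deriv (fun t => β t v) u / β u v) • deriv (fun t => r u t) v := by
    have h := schwarz hrsmooth u v
    rw [h]; exact hruv u v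
  rw [hRval] at hRd
  -- product rule
  have hprod : HasDerivAt (fun t => -(l t v) • deriv (fun s => r t s) v)
      (-(l u v) • ((deriv (fun t => β t v) u / β u v) • deriv (fun t => r u t) v)
        + (-(deriv (fun t => l t v) u)) • deriv (fun s => r u s) v) u :=
    hl.neg.smul hRd
  -- the function above is N_v in the first variable, whose u-derivative is 0 by Schwarz
  have hzero : deriv (fun t => deriv (fun s => N t s) v) u = 0 := by
    rw [schwarz hNsmooth u v]
    have : (fun t => deriv (fun s => N s t) u) = fun _ => (0 : EuclideanSpace ℝ (Fin 3)) :=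
      funext fun t => hNu u t
    rw [this, deriv_const]
  have hfun : (fun t => deriv (fun s => N t s) v) = fun t => -(l t v) • deriv (fun s => r t s) v :=
    funext fun t => hNv t v
  rw [hfun] at hzero
  have hD := hprod.deriv
  rw [hzero] at hD
  have hkey : (-(deriv (fun t => l t v) u + l u v * (deriv (fun t => β t v) u / β u v))) •
      deriv (fun t => r u t) v = 0 := by
    rw [hD]
    module
  rcases smul_eq_zero.1 hkey with h | h
  · have h1 : deriv (fun t => l t v) u + l u v * (deriv (fun t => β t v) u / β u v) = 0 := by
      linarith [neg_eq_zero.1 h]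
    refine ⟨h1, ?_⟩
    have hβne := (hβpos u v).ne'
    rw [hβu] at h1
    field_simp at h1
    have h2 : (deriv (fun t => l t v) u + (l u v) ^ 2 * Real.cot θ) * β u v = 0 := by
      linear_combination β u v * h1
    exact (mul_eq_zero.1 h2).resolve_right hβne
  · exact absurd h (hrv u v)
end
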